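/- arXiv:2004.01474 — 2 statements merged into one kernel-verified Lean document; each statement's English description precedes it below -/
import Mathlib

section
/- Let S be a multiplicatively closed subset of R satisfying the maximal multiple condition. Then an R-module M is an S-comultiplication module if and only if the localization S⁻¹M is a comultiplication S⁻¹R-module. -/
open Pointwise

/-- A multiplicatively closed set: `0 ∉ S`, `1 ∈ S`, closed under multiplication. -/
def IsMCS {R : Type*} [CommRing R] (S : Set R) : Prop :=
  (0 : R) ∉ S ∧ (1 : R) ∈ S ∧ ∀ s ∈ S, ∀ t ∈ S, s * t ∈ S

/-- The submodule `(0 :_M I) = {m ∈ M : I • m = 0}`. -/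
def resid (R M : Type*) [CommRing R] [AddCommGroup M] [Module R M] (I : Ideal R) :
    Submodule R M where
  carrier := {m | ∀ a ∈ I, a • m = 0}
  add_mem' := by
    intro x y hx hy a ha
    rw [smul_add, hx a ha, hy a ha, add_zero]
  zero_mem' := by
    intro a _
    rw [smul_zero]
  smul_mem' := by
    intro r x hx a ha
    rw [smul_comm, hx a ha, smul_zero]

/-- `M` is an `S`-comultiplication module: for each submodule `N` there exist `s ∈ S` and an
ideal `I` with `s • (0 :_M I) ⊆ N ⊆ (0 :_M I)`. -/
def IsSComult (R M : Type*) [CommRing R] [AddCommGroup M] [Module R M] (S : Set R) : Prop :=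
  ∀ N : Submodule R M, ∃ s ∈ S, ∃ I : Ideal R,
    (∀ m ∈ resid R M I, s • m ∈ N) ∧ N ≤ resid R M I

/-- `M` is a comultiplication module: every submodule `N` equals `(0 :_M ann N)`. -/
def IsComult (R M : Type*) [CommRing R] [AddCommGroup M] [Module R M] : Prop :=
  ∀ N : Submodule R M, N = resid R M N.annihilator


/-! If `s₀ ∈ S` is divisible by every element of `S`, then `m / t ∈ S⁻¹M` vanishes iff
`s₀ • m = 0`, and lies in the localization of a submodule `P` iff `s₀ • m ∈ P`. Consequently
`m / t ∈ (0 :_{S⁻¹M} S⁻¹I)` iff `s₀ • m ∈ (0 :_M I)`, and `ann (S⁻¹P) ≤ S⁻¹ ann P` because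
`a / u = s₀a / s₀u`. Since every submodule of `S⁻¹M` is the localization of its preimage in `M`,
the two conditions translate into each other, with `s₀` as the element of `S` required in the
`S`-comultiplication condition. -/

open Submodule IsLocalizedModule

section resid

variable {R M : Type*} [CommRing R] [AddCommGroup M] [Module R M]

lemma mem_resid_iff_le_ker {I : Ideal R} {m : M} :
    m ∈ resid R M I ↔ I ≤ LinearMap.ker (LinearMap.toSpanSingleton R M m) := by
  simp [SetLike.le_def, resid]

lemma resid_antitone : Antitone (resid R M) :=
  fun _ _ hIJ _ hm a ha => hm a (hIJ ha)

lemma le_resid_annihilator (N : Submodule R M) : N ≤ resid R M N.annihilator :=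
  fun m hm _ ha => mem_annihilator.mp ha m hm

lemma resid_annihilator_resid (I : Ideal R) :
    resid R M (resid R M I).annihilator = resid R M I :=
  le_antisymm (resid_antitone fun a ha => mem_annihilator.mpr fun _ hm => hm a ha)
    (le_resid_annihilator _)

lemma mem_resid_map_algebraMap {A N : Type*} [CommRing A] [Algebra R A] [AddCommGroup N]
    [Module A N] [Module R N] [IsScalarTower R A N] {I : Ideal R} {x : N} :
    x ∈ resid A N (I.map (algebraMap R A)) ↔ ∀ a ∈ I, a • x = 0 := by
  rw [mem_resid_iff_le_ker, Ideal.map_le_iff_le_comap]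
  simp [SetLike.le_def, algebraMap_smul]

end resid

def Submonoid.IsMaxMultiple {R : Type*} [CommMonoid R] (S : Submonoid R) (s₀ : R) : Prop :=
  s₀ ∈ S ∧ ∀ t ∈ S, t ∣ s₀

namespace Submonoid.IsMaxMultiple

variable {R M : Type*} [CommRing R] [AddCommGroup M] [Module R M] {S : Submonoid R} {s₀ : R}

lemma smul_mem (h : S.IsMaxMultiple s₀) {N : Submodule R M} {t : R} (ht : t ∈ S) {m : M}
    (hm : t • m ∈ N) : s₀ • m ∈ N := by
  obtain ⟨c, hc⟩ := h.2 t ht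
  rw [hc, mul_comm, mul_smul]
  exact N.smul_mem c hm

lemma smul_eq_zero (h : S.IsMaxMultiple s₀) {t : R} (ht : t ∈ S) {m : M} (hm : t • m = 0) :
    s₀ • m = 0 := by
  simpa using h.smul_mem (N := ⊥) ht (by simpa using hm)

variable {A N : Type*} [CommRing A] [Algebra R A] [AddCommGroup N]
  [Module R N] [Module A N] [IsScalarTower R A N]

section

variable (f : M →ₗ[R] N) [IsLocalizedModule S f]

lemma mk'_eq_zero_iff (h : S.IsMaxMultiple s₀) {m : M} {t : S} :
    mk' f m t = 0 ↔ s₀ • m = 0 := by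
  rw [mk'_eq_zero']
  exact ⟨fun ⟨u, hu⟩ => h.smul_eq_zero u.2 hu, fun h0 => ⟨⟨s₀, h.1⟩, h0⟩⟩

lemma mk'_mem_resid_map_iff (h : S.IsMaxMultiple s₀) {I : Ideal R} {m : M} {t : S} :
    mk' f m t ∈ resid A N (I.map (algebraMap R A)) ↔ s₀ • m ∈ resid R M I := by
  simp_rw [mem_resid_map_algebraMap, ← mk'_smul, h.mk'_eq_zero_iff f, resid, smul_comm s₀]
  rfl

variable [IsLocalization S A]

lemma mk'_mem_localized'_iff (h : S.IsMaxMultiple s₀) {P : Submodule R M} {m : M} {t : S} :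
    mk' f m t ∈ P.localized' A S f ↔ s₀ • m ∈ P := by
  constructor
  · rintro ⟨n, hn, u, hnu⟩
    obtain ⟨v, hv⟩ := (mk'_eq_mk'_iff f n m u t).mp hnu
    refine h.smul_mem (v * u).2 ?_
    rw [← Submonoid.smul_def, mul_smul, hv]
    exact P.smul_mem _ (P.smul_mem _ hn)
  · intro hm
    exact ⟨s₀ • m, hm, ⟨s₀, h.1⟩ * t, mk'_cancel_left f m ⟨s₀, h.1⟩ t⟩

lemma annihilator_localized'_le (h : S.IsMaxMultiple s₀) (P : Submodule R M) :
    (P.localized' A S f).annihilator ≤ P.annihilator.map (algebraMap R A) := by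
  intro x hx
  obtain ⟨a, u, rfl⟩ := IsLocalization.exists_mk'_eq S x
  have hann : s₀ * a ∈ P.annihilator := mem_annihilator.mpr fun n hn => by
    have := mem_annihilator.mp hx (mk' f n 1) ⟨n, hn, 1, rfl⟩
    rw [mk'_smul_mk', h.mk'_eq_zero_iff f] at this
    rwa [mul_smul]
  rw [← IsLocalization.mk'_cancel a u ⟨s₀, h.1⟩, IsLocalization.mk'_eq_mul_mk'_one, mul_comm a]
  exact Ideal.mul_mem_right _ _ (Ideal.mem_map_of_mem _ hann)

end

variable [IsLocalization S A]

theorem isSComult_of_isComult (f : M →ₗ[R] N) [IsLocalizedModule S f]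
    (h : S.IsMaxMultiple s₀) (hN : IsComult A N) : IsSComult R M S := by
  intro P
  refine ⟨s₀, h.1, P.annihilator, fun m hm => ?_, le_resid_annihilator P⟩
  rw [← h.mk'_mem_localized'_iff f (A := A) (t := 1), hN (P.localized' A S f)]
  refine resid_antitone (h.annihilator_localized'_le f P) ?_
  exact (h.mk'_mem_resid_map_iff f).mpr ((resid R M _).smul_mem s₀ hm)

theorem isComult_of_isSComult (f : M →ₗ[R] N) [IsLocalizedModule S f]
    (h : S.IsMaxMultiple s₀) (hM : IsSComult R M S) : IsComult A N := by
  intro W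
  set P := (W.restrictScalars R).comap f
  obtain ⟨s, hs, I, hsI, hPI⟩ := hM P
  have hW : W = P.localized' A S f := ((localized'gi A S f).l_u_eq W).symm
  suffices W = resid A N (I.map (algebraMap R A)) from this ▸ (resid_annihilator_resid _).symm
  ext x
  obtain ⟨⟨m, t⟩, rfl⟩ := mk'_surjective S f x
  rw [Function.uncurry_apply_pair, h.mk'_mem_resid_map_iff f, hW, h.mk'_mem_localized'_iff f]
  refine ⟨fun hm => hPI hm, fun hm => h.smul_mem (S.mul_mem hs h.1) ?_⟩
  rw [mul_smul]
  exact hsI _ hm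

theorem isSComult_iff_isComult (f : M →ₗ[R] N) [IsLocalizedModule S f]
    (h : S.IsMaxMultiple s₀) : IsSComult R M S ↔ IsComult A N :=
  ⟨h.isComult_of_isSComult f, h.isSComult_of_isComult f⟩

end Submonoid.IsMaxMultiple

theorem stmt7_general (R M : Type*) [CommRing R] [AddCommGroup M] [Module R M]
    (S : Submonoid R)
    (hmax : ∃ s ∈ S, ∀ t ∈ S, t ∣ s) :
    IsSComult R M (S : Set R) ↔ IsComult (Localization S) (LocalizedModule S M) := by
  obtain ⟨s₀, hs₀, hdvd⟩ := hmax
  exact (show S.IsMaxMultiple s₀ from ⟨hs₀, hdvd⟩).isSComult_iff_isComult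
    (LocalizedModule.mkLinearMap S M)

theorem stmt7 (R M : Type*) [CommRing R] [AddCommGroup M] [Module R M]
    (S : Submonoid R) (hS : IsMCS (S : Set R))
    (hmax : ∃ s ∈ S, ∀ t ∈ S, t ∣ s) :
    IsSComult R M (S : Set R) ↔ IsComult (Localization S) (LocalizedModule S M) :=
  stmt7_general R M S hmax
end

section
/- Every S-comultiplication R-module M is either S-cyclic (there exist s ∈ S and m ∈ M with s • M ⊆ R • m) or a torsion module (every element of M has nonzero annihilator). -/
open Pointwise

/- If some `m` has zero annihilator, apply the `S`-comultiplication property to `N = R m`: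
the ideal `I` with `R m ⊆ (0 :_M I)` kills `m`, so `I = 0` and `(0 :_M I) = M`, whence `s • M ⊆ R m`. -/

section

variable {R M : Type*} [CommRing R] [AddCommGroup M] [Module R M]

theorem resid_bot : resid R M ⊥ = ⊤ :=
  eq_top_iff.2 fun x _ a ha => by rw [(Submodule.mem_bot R).1 ha, zero_smul]

theorem eq_bot_of_span_singleton_le_resid {I : Ideal R} {m : M}
    (hm : ∀ r : R, r • m = 0 → r = 0) (hle : Submodule.span R {m} ≤ resid R M I) : I = ⊥ :=
  (Submodule.eq_bot_iff I).2 fun a ha => hm a (hle (Submodule.mem_span_singleton_self m) a ha)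

theorem IsSComult.exists_smul_mem_span_singleton {S : Set R} (h : IsSComult R M S) {m : M}
    (hm : ∀ r : R, r • m = 0 → r = 0) : ∃ s ∈ S, ∀ x : M, s • x ∈ Submodule.span R {m} := by
  obtain ⟨s, hs, I, hsI, hle⟩ := h (Submodule.span R {m})
  obtain rfl := eq_bot_of_span_singleton_le_resid hm hle
  exact ⟨s, hs, fun x => hsI x (resid_bot (R := R) (M := M) ▸ Submodule.mem_top)⟩

end

theorem stmt17_general (R M : Type*) [CommRing R] [AddCommGroup M] [Module R M]
    (S : Set R) (h : IsSComult R M S) :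
    (∃ s ∈ S, ∃ m : M, ∀ x : M, s • x ∈ Submodule.span R {m}) ∨
      ∀ m : M, ∃ r : R, r ≠ 0 ∧ r • m = 0 := by
  refine or_iff_not_imp_right.2 fun hnt => ?_
  push Not at hnt
  obtain ⟨m, hm⟩ := hnt
  obtain ⟨s, hs, hsm⟩ := h.exists_smul_mem_span_singleton fun r => not_imp_not.1 (hm r)
  exact ⟨s, hs, m, hsm⟩

theorem stmt17 (R M : Type*) [CommRing R] [AddCommGroup M] [Module R M]
    (S : Set R) (hS : IsMCS S) (h : IsSComult R M S) :
    (∃ s ∈ S, ∃ m : M, ∀ x : M, s • x ∈ Submodule.span R {m}) ∨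
      ∀ m : M, ∃ r : R, r ≠ 0 ∧ r • m = 0 :=
  stmt17_general R M S h
end
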